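/- arXiv:2309.07562 — 8 statements merged into one kernel-verified Lean document; each statement's English description precedes it below -/
import Mathlib

section
/- For a ∈ ℂ \ {-1, 0, 1}, the Chebyshev's method of p_a(z) = (z^2 - 1)(z^2 - a) is the rational map C_a(z) = (42 z^{10} + A z^8 + B z^6 + C z^4 + D z^2 + a^2(a+1)) / (8 z^3 (2z^2 - (a+1))^3), where A = -51(a+1), B = 4(5a^2 + 3a + 5), C = -3(a^3 - 7a^2 - 7a + 1), D = -6a(a^2 + 3a + 1). -/
noncomputable def pa (a : ℂ) : ℂ → ℂ := fun z => (z ^ 2 - 1) * (z ^ 2 - a)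

noncomputable def Ca (a : ℂ) (z : ℂ) : ℂ :=
  (42 * z ^ 10 + (-51 * (a + 1)) * z ^ 8 + (4 * (5 * a ^ 2 + 3 * a + 5)) * z ^ 6
      + (-3 * (a ^ 3 - 7 * a ^ 2 - 7 * a + 1)) * z ^ 4
      + (-6 * a * (a ^ 2 + 3 * a + 1)) * z ^ 2 + a ^ 2 * (a + 1))
    / (8 * z ^ 3 * (2 * z ^ 2 - (a + 1)) ^ 3)

lemma deriv_pa (a : ℂ) : deriv (pa a) = fun z => 4 * z ^ 3 - 2 * (a + 1) * z := by
  funext z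
  unfold pa
  have h : HasDerivAt (fun z : ℂ => (z ^ 2 - 1) * (z ^ 2 - a))
      (4 * z ^ 3 - 2 * (a + 1) * z) z := by
    have h1 : HasDerivAt (fun z : ℂ => z ^ 2 - 1) (2 * z) z := by
      simpa using ((hasDerivAt_pow 2 z).sub_const 1)
    have h2 : HasDerivAt (fun z : ℂ => z ^ 2 - a) (2 * z) z := by
      simpa using ((hasDerivAt_pow 2 z).sub_const a)
    have := h1.mul h2
    exact this.congr_deriv (by ring)
  exact h.deriv

lemma deriv2_pa (a : ℂ) (z : ℂ) :
    deriv (deriv (pa a)) z = 12 * z ^ 2 - 2 * (a + 1) := by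
  rw [deriv_pa]
  have h : HasDerivAt (fun z : ℂ => 4 * z ^ 3 - 2 * (a + 1) * z)
      (12 * z ^ 2 - 2 * (a + 1)) z := by
    have h1 : HasDerivAt (fun z : ℂ => 4 * z ^ 3) (4 * (3 * z ^ 2)) z :=
      (hasDerivAt_pow 3 z).const_mul 4 |>.congr_deriv (by ring)
    have h2 : HasDerivAt (fun z : ℂ => 2 * (a + 1) * z) (2 * (a + 1)) z := by
      simpa using (hasDerivAt_id z).const_mul (2 * (a + 1))
    exact (h1.sub h2).congr_deriv (by ring)
  exact h.deriv

lemma key_frac (zv P S q : ℂ) (hq : q ≠ 0) :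
    zv - (1 + P * S / q ^ 2 / 2) * (P / q)
      = (2 * zv * q ^ 3 - (2 * q ^ 2 + P * S) * P) / (2 * q ^ 3) := by
  field_simp

/-- Chebyshev's method of `p_a(z) = (z^2-1)(z^2-a)` equals the rational map `C_a`. -/
theorem stmt1 (a : ℂ) (ha1 : a ≠ -1) (ha0 : a ≠ 0) (ha2 : a ≠ 1)
    (z : ℂ) (hz : z ≠ 0) (hz2 : 2 * z ^ 2 ≠ a + 1) :
    z - (1 + (pa a z * deriv (deriv (pa a)) z / (deriv (pa a) z) ^ 2) / 2)
        * (pa a z / deriv (pa a) z) = Ca a z := by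
  have hd : deriv (pa a) z = 2 * z * (2 * z ^ 2 - (a + 1)) := by
    rw [deriv_pa]; ring
  have hne : 2 * z ^ 2 - (a + 1) ≠ 0 := sub_ne_zero.mpr hz2
  rw [deriv2_pa, hd]
  have hD : 8 * z ^ 3 * (2 * z ^ 2 - (a + 1)) ^ 3 ≠ 0 := by
    apply mul_ne_zero (mul_ne_zero (by norm_num) (pow_ne_zero _ hz)) (pow_ne_zero _ hne)
  have hq : 2 * z * (2 * z ^ 2 - (a + 1)) ≠ 0 :=
    mul_ne_zero (mul_ne_zero two_ne_zero hz) hne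
  rw [key_frac z (pa a z) (12 * z ^ 2 - 2 * (a + 1)) _ hq]
  unfold pa Ca
  rw [div_eq_div_iff (mul_ne_zero two_ne_zero (pow_ne_zero 3 hq)) hD]
  ring
end

section
/- For a ∈ (-1,1) \ {0}, the four simple critical points of C_a, i.e., the solutions of 28z^4 - 8(a+1)z^2 + (a+1)^2 = 0, are neither real nor purely imaginary. -/
/-! The quartic is a real quadratic in `w = z ^ 2` with discriminant `-48 (a + 1) ^ 2 < 0`, so
`z ^ 2` is not real. Since `(z ^ 2).im = 2 * z.re * z.im`, neither `z.re` nor `z.im` vanishes. -/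

lemma Complex.im_ne_zero_of_quadratic_eq_zero {a b c : ℝ} (hdisc : discrim a b c < 0) {w : ℂ}
    (hw : a * (w * w) + b * w + c = 0) : w.im ≠ 0 := by
  intro him
  have hw_real : w = (w.re : ℂ) := Complex.ext rfl (by simpa using him)
  rw [hw_real] at hw
  have hroot : a * (w.re * w.re) + b * w.re + c = 0 := by exact_mod_cast hw
  nlinarith [discrim_eq_sq_of_quadratic_eq_zero hroot, sq_nonneg (2 * a * w.re + b)]

lemma im_sq_ne_zero_of_critical_point {c : ℝ} (hc : c ≠ 0) {z : ℂ}
    (hz : 28 * z ^ 4 - 8 * (c : ℂ) * z ^ 2 + (c : ℂ) ^ 2 = 0) : (z ^ 2).im ≠ 0 := by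
  have hdisc : discrim 28 (-8 * c) (c ^ 2) < 0 := by
    rw [discrim]
    nlinarith [sq_pos_of_ne_zero hc]
  refine Complex.im_ne_zero_of_quadratic_eq_zero hdisc ?_
  push_cast
  linear_combination hz

theorem stmt4_general (a : ℝ) (ha1 : -1 < a)
    (z : ℂ) (hz : 28 * z ^ 4 - 8 * ((a : ℂ) + 1) * z ^ 2 + ((a : ℂ) + 1) ^ 2 = 0) :
    z.im ≠ 0 ∧ z.re ≠ 0 := by
  have hsq : (z ^ 2).im ≠ 0 :=
    im_sq_ne_zero_of_critical_point (c := a + 1) (by linarith) (by exact_mod_cast hz)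
  rw [sq, Complex.mul_im] at hsq
  constructor <;> intro h <;> simp [h] at hsq

/-- For `a ∈ (-1,1) \ {0}`, the simple critical points of `C_a`, i.e. the solutions of
`28z^4 - 8(a+1)z^2 + (a+1)^2 = 0`, are neither real nor purely imaginary. -/
theorem stmt4 (a : ℝ) (ha1 : -1 < a) (ha2 : a < 1) (ha0 : a ≠ 0)
    (z : ℂ) (hz : 28 * z ^ 4 - 8 * ((a : ℂ) + 1) * z ^ 2 + ((a : ℂ) + 1) ^ 2 = 0) :
    z.im ≠ 0 ∧ z.re ≠ 0 :=
  stmt4_general a ha1 z hz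
end

section
/- For a ∈ ℂ \ {-1, 0, 1}, the fixed points of C_a in ℂ that are not roots of p_a (the extraneous fixed points) are exactly the solutions of Q(z) = 22z^6 - 23(a+1)z^4 + (5a^2 + 16a + 5)z^2 - a(a+1) = 0. -/
/-!
Away from its poles `z = 0` and `2 z ^ 2 = a + 1`, Chebyshev's map is `C_a z = z - Q p_a / D`
with `D = 8 z ^ 3 (2 z ^ 2 - (a + 1)) ^ 3`, so its fixed points are the zeros of `Q p_a`.
Both `Q` and `p_a` are polynomials in `w = z ^ 2`, and for `a ∉ {-1, 0, 1}` the cubic `Q` does not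
vanish at `w = 0`, `w = (a + 1) / 2`, `w = 1` or `w = a`: a zero of `Q` is never a pole of `C_a`
nor a root of `p_a`.
-/

namespace ChebyshevMethod

-- `Q a w` and `p a w` are `Q(z)` and `p_a(z)` as functions of `w = z ^ 2`.
def Q (a w : ℂ) : ℂ :=
  22 * w ^ 3 - 23 * (a + 1) * w ^ 2 + (5 * a ^ 2 + 16 * a + 5) * w - a * (a + 1)

def p (a w : ℂ) : ℂ := (w - 1) * (w - a)

theorem Q_sq (a z : ℂ) :
    Q a (z ^ 2) = 22 * z ^ 6 - 23 * (a + 1) * z ^ 4 + (5 * a ^ 2 + 16 * a + 5) * z ^ 2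
      - a * (a + 1) := by
  unfold Q; ring

theorem Q_zero (a : ℂ) : Q a 0 = -(a * (a + 1)) := by unfold Q; ring

theorem Q_one (a : ℂ) : Q a 1 = 4 * (a - 1) ^ 2 := by unfold Q; ring

theorem Q_self (a : ℂ) : Q a a = 4 * a * (a - 1) ^ 2 := by unfold Q; ring

theorem Q_half_add_one (a : ℂ) : Q a ((a + 1) / 2) = -((a + 1) * (a - 1) ^ 2 / 2) := by
  unfold Q; ring

theorem denom_ne_zero {a z : ℂ} (hz : z ≠ 0) (hd : 2 * z ^ 2 ≠ a + 1) :
    8 * z ^ 3 * (2 * z ^ 2 - (a + 1)) ^ 3 ≠ 0 :=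
  mul_ne_zero (mul_ne_zero (by norm_num) (pow_ne_zero _ hz)) (pow_ne_zero _ (sub_ne_zero.mpr hd))

theorem Ca_eq_sub_div {a z : ℂ} (hz : z ≠ 0) (hd : 2 * z ^ 2 ≠ a + 1) :
    Ca a z = z - Q a (z ^ 2) * p a (z ^ 2) / (8 * z ^ 3 * (2 * z ^ 2 - (a + 1)) ^ 3) := by
  rw [Ca, eq_sub_iff_add_eq, ← add_div, div_eq_iff (denom_ne_zero hz hd), Q, p]
  ring

theorem Ca_eq_self_iff {a z : ℂ} (hz : z ≠ 0) (hd : 2 * z ^ 2 ≠ a + 1) :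
    Ca a z = z ↔ Q a (z ^ 2) * p a (z ^ 2) = 0 := by
  rw [Ca_eq_sub_div hz hd, sub_eq_self, div_eq_zero_iff, or_iff_left (denom_ne_zero hz hd)]

variable {a w : ℂ}

theorem ne_zero_of_Q_eq_zero (ha1 : a ≠ -1) (ha0 : a ≠ 0) (hQ : Q a w = 0) : w ≠ 0 := by
  rintro rfl
  rw [Q_zero, neg_eq_zero] at hQ
  exact mul_ne_zero ha0 (fun h => ha1 (eq_neg_of_add_eq_zero_left h)) hQ

theorem two_mul_ne_of_Q_eq_zero (ha1 : a ≠ -1) (ha2 : a ≠ 1) (hQ : Q a w = 0) :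
    2 * w ≠ a + 1 := by
  intro hw
  rw [show w = (a + 1) / 2 by rw [← hw]; ring, Q_half_add_one] at hQ
  have : a + 1 ≠ 0 := fun h => ha1 (eq_neg_of_add_eq_zero_left h)
  have : a - 1 ≠ 0 := sub_ne_zero.mpr ha2
  simp_all

theorem ne_one_of_Q_eq_zero (ha2 : a ≠ 1) (hQ : Q a w = 0) : w ≠ 1 := by
  rintro rfl
  rw [Q_one] at hQ
  have : a - 1 ≠ 0 := sub_ne_zero.mpr ha2
  simp_all

theorem ne_self_of_Q_eq_zero (ha0 : a ≠ 0) (ha2 : a ≠ 1) (hQ : Q a w = 0) : w ≠ a := by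
  rintro rfl
  rw [Q_self] at hQ
  have : w - 1 ≠ 0 := sub_ne_zero.mpr ha2
  simp_all

theorem p_ne_zero_of_Q_eq_zero (ha0 : a ≠ 0) (ha2 : a ≠ 1) (hQ : Q a w = 0) : p a w ≠ 0 :=
  mul_ne_zero (sub_ne_zero.mpr (ne_one_of_Q_eq_zero ha2 hQ))
    (sub_ne_zero.mpr (ne_self_of_Q_eq_zero ha0 ha2 hQ))

end ChebyshevMethod

open ChebyshevMethod

/-- The extraneous fixed points of `C_a` — fixed points in `ℂ` (in the domain of `C_a`)
that are not roots of `p_a` — are exactly the solutions of `Q(z) = 0`. -/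
theorem stmt5 (a : ℂ) (ha1 : a ≠ -1) (ha0 : a ≠ 0) (ha2 : a ≠ 1) (z : ℂ) :
    (z ≠ 0 ∧ 2 * z ^ 2 ≠ a + 1 ∧ (z ^ 2 - 1) * (z ^ 2 - a) ≠ 0 ∧ Ca a z = z) ↔
      22 * z ^ 6 - 23 * (a + 1) * z ^ 4 + (5 * a ^ 2 + 16 * a + 5) * z ^ 2
        - a * (a + 1) = 0 := by
  rw [← Q_sq]
  change _ ∧ _ ∧ p a (z ^ 2) ≠ 0 ∧ _ ↔ _
  constructor
  · rintro ⟨hz, hd, hp, hC⟩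
    exact (mul_eq_zero.mp ((Ca_eq_self_iff hz hd).mp hC)).resolve_right hp
  · intro hQ
    have hz : z ≠ 0 := pow_ne_zero_iff two_ne_zero |>.mp (ne_zero_of_Q_eq_zero ha1 ha0 hQ)
    have hd := two_mul_ne_of_Q_eq_zero ha1 ha2 hQ
    exact ⟨hz, hd, p_ne_zero_of_Q_eq_zero ha0 ha2 hQ,
      (Ca_eq_self_iff hz hd).mpr (mul_eq_zero_of_left hQ _)⟩
end

section
/- Let a ∈ (-1,1) \ {0}, ξ = √((a+1)/2) > 0, and define λ: ℝ \ {±ξ/√3} → ℝ by λ(x) = 2(3 - 6x^2(x^2 - ξ^2)/(3x^2 - ξ^2)^2). Then λ(x) > 14/3 for all x in its domain. -/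
/-!
With `s = ξ²`, the claim `λ(x) > 14/3` is `6x²(x²-s) < (2/3)(3x²-s)²`, and
`(3x²-s)² - 9x²(x²-s) = s(3x²+s)` is positive as soon as `s > 0`.
At the poles `3x² = s` the quotient is `0` in Lean, so the inequality holds for every real `x`.
-/

lemma nine_mul_sq_mul_lt_sq {s : ℝ} (hs : 0 < s) (x : ℝ) :
    9 * x ^ 2 * (x ^ 2 - s) < (3 * x ^ 2 - s) ^ 2 := by
  have h : (3 * x ^ 2 - s) ^ 2 - 9 * x ^ 2 * (x ^ 2 - s) = s * (3 * x ^ 2 + s) := by ring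
  have : 0 < s * (3 * x ^ 2 + s) := by positivity
  linarith

lemma div_lt_of_lt_mul_of_nonneg {a b c : ℝ} (hb : 0 ≤ b) (hc : 0 < c) (h : a < c * b) :
    a / b < c := by
  rcases hb.eq_or_lt with rfl | hb
  · simpa using hc
  · rwa [div_lt_iff₀ hb]

lemma six_mul_sq_mul_div_sq_lt {s : ℝ} (hs : 0 < s) (x : ℝ) :
    6 * x ^ 2 * (x ^ 2 - s) / (3 * x ^ 2 - s) ^ 2 < 2 / 3 := by
  refine div_lt_of_lt_mul_of_nonneg (sq_nonneg _) (by norm_num) ?_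
  linarith [nine_mul_sq_mul_lt_sq hs x]

theorem stmt8_general (a : ℝ) (ha1 : -1 < a)
    (x : ℝ) :
    2 * (3 - 6 * x ^ 2 * (x ^ 2 - Real.sqrt ((a + 1) / 2) ^ 2)
        / (3 * x ^ 2 - Real.sqrt ((a + 1) / 2) ^ 2) ^ 2) > 14 / 3 := by
  have hs : 0 < Real.sqrt ((a + 1) / 2) ^ 2 := by
    rw [Real.sq_sqrt (by linarith)]
    linarith
  linarith [six_mul_sq_mul_div_sq_lt hs x]

/-- The multiplier function `λ(x) = 2(3 - 6x²(x²-ξ²)/(3x²-ξ²)²)`, `ξ = √((a+1)/2)`,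
satisfies `λ(x) > 14/3` on its domain `ℝ \ {±ξ/√3}`. -/
theorem stmt8 (a : ℝ) (ha1 : -1 < a) (ha2 : a < 1) (ha0 : a ≠ 0)
    (x : ℝ)
    (hx1 : x ≠ Real.sqrt ((a + 1) / 2) / Real.sqrt 3)
    (hx2 : x ≠ -(Real.sqrt ((a + 1) / 2) / Real.sqrt 3)) :
    2 * (3 - 6 * x ^ 2 * (x ^ 2 - Real.sqrt ((a + 1) / 2) ^ 2)
        / (3 * x ^ 2 - Real.sqrt ((a + 1) / 2) ^ 2) ^ 2) > 14 / 3 :=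
  stmt8_general a ha1 x
end

section
/- For a ∈ (-1,1) \ {0}, every real extraneous fixed point x of C_a (i.e., real solution of 22x^6 - 23(a+1)x^4 + (5a^2+16a+5)x^2 - a(a+1) = 0 that is not a root of p_a) is repelling: |C_a'(x)| > 1. In fact C_a'(x) ≥ 14/3. -/
/-!
With `s = a + 1 > 0` and `t = x² ≥ 0`, the inequality `L_{p_a'}(x) ≤ 2/3` clears denominators to
`(2/3)(6t - s)² - 12t(2t - s) = 4ts + 2s²/3 ≥ 0`, so `C_a'(x) = 2(3 - L) ≥ 14/3` wherever `L` is
defined. The only thing to check at an extraneous fixed point is that it is not a pole of `L`.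
-/

/-- At `6x² = a + 1` the extraneous-fixed-point sextic takes the value `8(a + 1)³/27`. -/
lemma six_mul_sq_sub_ne_zero_of_extraneous {a x : ℝ} (ha : a + 1 ≠ 0)
    (hQ : 22 * x ^ 6 - 23 * (a + 1) * x ^ 4 + (5 * a ^ 2 + 16 * a + 5) * x ^ 2
        - a * (a + 1) = 0) :
    6 * x ^ 2 - (a + 1) ≠ 0 := by
  intro hpole
  have hx2 : x ^ 2 = (a + 1) / 6 := by linarith
  have hcube : 8 * (a + 1) ^ 3 / 27 = 0 := by
    rw [← hQ, show x ^ 6 = (x ^ 2) ^ 3 by ring, show x ^ 4 = (x ^ 2) ^ 2 by ring, hx2]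
    ring
  exact pow_ne_zero 3 ha (by linarith)

lemma logDeriv_ratio_le_two_thirds {s : ℝ} (hs : 0 ≤ s) (x : ℝ) (hpole : 6 * x ^ 2 - s ≠ 0) :
    12 * x ^ 2 * (2 * x ^ 2 - s) / (6 * x ^ 2 - s) ^ 2 ≤ 2 / 3 := by
  rw [div_le_iff₀ (by positivity)]
  nlinarith [mul_nonneg hs (sq_nonneg x), sq_nonneg s]

theorem stmt9_general (a : ℝ) (ha1 : -1 < a)
    (x : ℝ)
    (hQ : 22 * x ^ 6 - 23 * (a + 1) * x ^ 4 + (5 * a ^ 2 + 16 * a + 5) * x ^ 2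
        - a * (a + 1) = 0) :
    14 / 3 ≤ 2 * (3 - 12 * x ^ 2 * (2 * x ^ 2 - (a + 1)) / (6 * x ^ 2 - (a + 1)) ^ 2) ∧
    1 < |2 * (3 - 12 * x ^ 2 * (2 * x ^ 2 - (a + 1)) / (6 * x ^ 2 - (a + 1)) ^ 2)| := by
  have hs : 0 < a + 1 := by linarith
  have hL := logDeriv_ratio_le_two_thirds hs.le x (six_mul_sq_sub_ne_zero_of_extraneous hs.ne' hQ)
  refine ⟨by linarith, ?_⟩
  rw [abs_of_pos (by linarith)]
  linarith

/-- Every real extraneous fixed point of `C_a`, `a ∈ (-1,1) \ {0}`, is repelling: its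
multiplier `C_a'(x) = 2(3 - 12x²(2x²-(a+1))/(6x²-(a+1))²)` is at least `14/3 > 1`. -/
theorem stmt9 (a : ℝ) (ha1 : -1 < a) (ha2 : a < 1) (ha0 : a ≠ 0)
    (x : ℝ)
    (hQ : 22 * x ^ 6 - 23 * (a + 1) * x ^ 4 + (5 * a ^ 2 + 16 * a + 5) * x ^ 2
        - a * (a + 1) = 0)
    (hp : (x ^ 2 - 1) * (x ^ 2 - a) ≠ 0) :
    14 / 3 ≤ 2 * (3 - 12 * x ^ 2 * (2 * x ^ 2 - (a + 1)) / (6 * x ^ 2 - (a + 1)) ^ 2) ∧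
    1 < |2 * (3 - 12 * x ^ 2 * (2 * x ^ 2 - (a + 1)) / (6 * x ^ 2 - (a + 1)) ^ 2)| :=
  stmt9_general a ha1 x hQ
end

section
/- For 0 < a < 1, the cubic f(w) = 22w^3 - 23(a+1)w^2 + (5a^2+16a+5)w - a(a+1) has exactly one real root in each of the intervals (0, a), (a, (a+1)/2), and ((a+1)/2, 1). -/
/-!
`f` changes sign at `0 < a < (a+1)/2 < 1`, so by the intermediate value theorem it has a root in
each of the three intervals; being a cubic it has no further roots, so each of them is the only
root in its interval.
-/

open Set Polynomial

namespace Cubic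

variable {R : Type*} [CommRing R] [IsDomain R] {P : Cubic R}

theorem eq_or_eq_or_eq_of_mem_roots {x y z t : R} (hx : x ∈ P.roots) (hy : y ∈ P.roots)
    (hz : z ∈ P.roots) (hxy : x ≠ y) (hxz : x ≠ z) (hyz : y ≠ z) (ht : t ∈ P.roots) :
    t = x ∨ t = y ∨ t = z := by
  classical
  by_contra! htxyz
  obtain ⟨htx, hty, htz⟩ := htxyz
  have hsub : ({t, x, y, z} : Finset R) ⊆ P.roots.toFinset := by
    intro s hs
    simp only [Finset.mem_insert, Finset.mem_singleton] at hs
    rcases hs with rfl | rfl | rfl | rfl <;> simpa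
  have hcard : ({t, x, y, z} : Finset R).card = 4 := by
    rw [Finset.card_insert_of_notMem (by simp [htx, hty, htz]),
      Finset.card_insert_of_notMem (by simp [hxy, hxz]), Finset.card_pair hyz]
  have := (Finset.card_le_card hsub).trans card_roots_le
  omega

end Cubic

noncomputable def extraneousCubic (a : ℝ) : Cubic ℝ :=
  ⟨22, -(23 * (a + 1)), 5 * a ^ 2 + 16 * a + 5, -(a * (a + 1))⟩

namespace extraneousCubic

theorem eval_eq (a w : ℝ) : (extraneousCubic a).toPoly.eval w =
    22 * w ^ 3 - 23 * (a + 1) * w ^ 2 + (5 * a ^ 2 + 16 * a + 5) * w - a * (a + 1) := by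
  simp only [extraneousCubic, Cubic.toPoly, eval_add, eval_mul, eval_C, eval_pow, eval_X]
  ring

theorem mem_roots_iff (a w : ℝ) :
    w ∈ (extraneousCubic a).roots ↔ (extraneousCubic a).toPoly.eval w = 0 :=
  mem_roots (Cubic.ne_zero_of_a_ne_zero (by norm_num [extraneousCubic]))

variable {a : ℝ}

theorem eval_zero_neg (ha0 : 0 < a) : (extraneousCubic a).toPoly.eval 0 < 0 := by
  have hval : (extraneousCubic a).toPoly.eval 0 = -(a * (a + 1)) := by rw [eval_eq]; ring
  rw [hval, neg_neg_iff_pos]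
  positivity

theorem eval_self_pos (ha0 : 0 < a) (ha1 : a < 1) : 0 < (extraneousCubic a).toPoly.eval a := by
  have hval : (extraneousCubic a).toPoly.eval a = 4 * a * (1 - a) ^ 2 := by rw [eval_eq]; ring
  have := sub_pos.2 ha1
  rw [hval]
  positivity

theorem eval_midpoint_neg (ha0 : 0 < a) (ha1 : a < 1) :
    (extraneousCubic a).toPoly.eval ((a + 1) / 2) < 0 := by
  have hval : (extraneousCubic a).toPoly.eval ((a + 1) / 2) = -((1 - a) ^ 2 * (1 + a) / 2) := by
    rw [eval_eq]; ring
  have := sub_pos.2 ha1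
  rw [hval, neg_neg_iff_pos]
  positivity

theorem eval_one_pos (ha1 : a < 1) : 0 < (extraneousCubic a).toPoly.eval 1 := by
  have hval : (extraneousCubic a).toPoly.eval 1 = 4 * (1 - a) ^ 2 := by rw [eval_eq]; ring
  have := sub_pos.2 ha1
  rw [hval]
  positivity

end extraneousCubic

/-- For `0 < a < 1`, `f(w) = 22w³ - 23(a+1)w² + (5a²+16a+5)w - a(a+1)` has exactly one
root in each of `(0,a)`, `(a,(a+1)/2)` and `((a+1)/2, 1)`. -/
theorem stmt10 (a : ℝ) (ha0 : 0 < a) (ha1 : a < 1) :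
    (∃! w : ℝ, w ∈ Set.Ioo 0 a ∧
      22 * w ^ 3 - 23 * (a + 1) * w ^ 2 + (5 * a ^ 2 + 16 * a + 5) * w - a * (a + 1) = 0) ∧
    (∃! w : ℝ, w ∈ Set.Ioo a ((a + 1) / 2) ∧
      22 * w ^ 3 - 23 * (a + 1) * w ^ 2 + (5 * a ^ 2 + 16 * a + 5) * w - a * (a + 1) = 0) ∧
    (∃! w : ℝ, w ∈ Set.Ioo ((a + 1) / 2) 1 ∧
      22 * w ^ 3 - 23 * (a + 1) * w ^ 2 + (5 * a ^ 2 + 16 * a + 5) * w - a * (a + 1) = 0) := by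
  open extraneousCubic in
  have hf (s : Set ℝ) := (extraneousCubic a).toPoly.continuousOn (s := s)
  obtain ⟨w₁, hw₁, hr₁⟩ := intermediate_value_Ioo ha0.le (hf _)
    ⟨eval_zero_neg ha0, eval_self_pos ha0 ha1⟩
  obtain ⟨w₂, hw₂, hr₂⟩ := intermediate_value_Ioo' (by linarith) (hf _)
    ⟨eval_midpoint_neg ha0 ha1, eval_self_pos ha0 ha1⟩
  obtain ⟨w₃, hw₃, hr₃⟩ := intermediate_value_Ioo (by linarith) (hf _)
    ⟨eval_midpoint_neg ha0 ha1, eval_one_pos ha1⟩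
  simp only [← eval_eq, ← mem_roots_iff]
  rw [← mem_roots_iff] at hr₁ hr₂ hr₃
  have hroots t (ht : t ∈ (extraneousCubic a).roots) : t = w₁ ∨ t = w₂ ∨ t = w₃ :=
    Cubic.eq_or_eq_or_eq_of_mem_roots hr₁ hr₂ hr₃ (hw₁.2.trans hw₂.1).ne
      (hw₁.2.trans (hw₂.1.trans (hw₂.2.trans hw₃.1))).ne (hw₂.2.trans hw₃.1).ne ht
  refine ⟨⟨w₁, ⟨hw₁, hr₁⟩, ?_⟩, ⟨w₂, ⟨hw₂, hr₂⟩, ?_⟩, ⟨w₃, ⟨hw₃, hr₃⟩, ?_⟩⟩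
  all_goals
    rintro t ⟨ht, hrt⟩
    simp only [mem_Ioo] at ht hw₁ hw₂ hw₃
    rcases hroots t hrt with rfl | rfl | rfl <;> first | rfl | linarith
end

section
/- For 0 < a < 1, define φ_a(y) = (42y^{10} - Ay^8 + By^6 - Cy^4 + Dy^2 - a^2(a+1))/(8y^3(2y^2+(a+1))^3) (so C_a(iy) = iφ_a(y)). Then φ_a has exactly one root in (0,1), and hence C_a has exactly two purely imaginary roots. -/
/-- `φ_a`, the restriction of `C_a` to the imaginary axis: `C_a(iy) = i φ_a(y)`. -/
noncomputable def phiA (a : ℝ) (y : ℝ) : ℝ :=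
  (42 * y ^ 10 + 51 * (a + 1) * y ^ 8 + 4 * (5 * a ^ 2 + 3 * a + 5) * y ^ 6
      + 3 * (a ^ 3 - 7 * a ^ 2 - 7 * a + 1) * y ^ 4
      - 6 * a * (a ^ 2 + 3 * a + 1) * y ^ 2 - a ^ 2 * (a + 1))
    / (8 * y ^ 3 * (2 * y ^ 2 + (a + 1)) ^ 3)

open Complex

def phiNum (a y : ℝ) : ℝ :=
  42 * y ^ 10 + 51 * (a + 1) * y ^ 8 + 4 * (5 * a ^ 2 + 3 * a + 5) * y ^ 6
    + 3 * (a ^ 3 - 7 * a ^ 2 - 7 * a + 1) * y ^ 4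
    - 6 * a * (a ^ 2 + 3 * a + 1) * y ^ 2 - a ^ 2 * (a + 1)

lemma Ca_I_mul_ofReal (a y : ℝ) : Ca a (I * y) = I * phiA a y := by
  have h6 : I ^ 6 = -1 := by rw [I_pow_eq_pow_mod]; norm_num
  have h8 : I ^ 8 = 1 := by rw [I_pow_eq_pow_mod]; norm_num
  have h10 : I ^ 10 = -1 := by rw [I_pow_eq_pow_mod]; norm_num
  simp only [Ca, phiA, mul_pow, I_sq, I_pow_three, I_pow_four, h6, h8, h10]
  push_cast
  rw [show 8 * (-I * (y : ℂ) ^ 3) * (2 * (-1 * (y : ℂ) ^ 2) - (a + 1)) ^ 3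
      = 8 * y ^ 3 * (2 * y ^ 2 + (a + 1)) ^ 3 * I by ring, ← div_div, div_I]
  ring

lemma Ca_I_mul_ofReal_eq_zero_iff (a y : ℝ) : Ca a (I * y) = 0 ↔ phiA a y = 0 := by
  simp [Ca_I_mul_ofReal, I_ne_zero]

lemma phiA_neg (a y : ℝ) : phiA a (-y) = -phiA a y := by
  simp only [phiA]
  rw [show 8 * (-y) ^ 3 * (2 * (-y) ^ 2 + (a + 1)) ^ 3
      = -(8 * y ^ 3 * (2 * y ^ 2 + (a + 1)) ^ 3) by ring, div_neg]
  ring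

lemma phiA_eq_zero_iff {a y : ℝ} (ha : 0 ≤ a) (hy : 0 < y) : phiA a y = 0 ↔ phiNum a y = 0 := by
  have hden : 8 * y ^ 3 * (2 * y ^ 2 + (a + 1)) ^ 3 ≠ 0 := by positivity
  rw [phiA, div_eq_zero_iff, or_iff_left hden, phiNum]

lemma pow_four_mul_phiNum_lt {a y₁ y₂ : ℝ} (ha : 0 ≤ a) (hy₁ : 0 < y₁) (h : y₁ < y₂) :
    y₂ ^ 4 * phiNum a y₁ < y₁ ^ 4 * phiNum a y₂ := by
  have key : y₁ ^ 4 * phiNum a y₂ - y₂ ^ 4 * phiNum a y₁ =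
      42 * (y₁ ^ 4 * y₂ ^ 4) * (y₂ ^ 6 - y₁ ^ 6)
      + 51 * (a + 1) * (y₁ ^ 4 * y₂ ^ 4) * (y₂ ^ 4 - y₁ ^ 4)
      + 4 * (5 * a ^ 2 + 3 * a + 5) * (y₁ ^ 4 * y₂ ^ 4) * (y₂ ^ 2 - y₁ ^ 2)
      + 6 * a * (a ^ 2 + 3 * a + 1) * (y₁ ^ 2 * y₂ ^ 2) * (y₂ ^ 2 - y₁ ^ 2)
      + a ^ 2 * (a + 1) * (y₂ ^ 4 - y₁ ^ 4) := by
    unfold phiNum; ring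
  have hpow : ∀ n ≠ 0, 0 < y₂ ^ n - y₁ ^ n := fun n hn =>
    sub_pos.mpr (pow_lt_pow_left₀ h hy₁.le hn)
  have h2 := hpow 2 two_ne_zero
  have h4 := hpow 4 four_ne_zero
  have h6 := hpow 6 (by norm_num)
  have hy₂ : 0 < y₂ := hy₁.trans h
  have : 0 < y₁ ^ 4 * phiNum a y₂ - y₂ ^ 4 * phiNum a y₁ := by
    rw [key]
    positivity
  linarith

lemma eq_of_phiNum_eq_zero {a y₁ y₂ : ℝ} (ha : 0 ≤ a) (hy₁ : 0 < y₁) (hy₂ : 0 < y₂)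
    (h₁ : phiNum a y₁ = 0) (h₂ : phiNum a y₂ = 0) : y₁ = y₂ := by
  rcases lt_trichotomy y₁ y₂ with h | h | h
  · simpa [h₁, h₂] using pow_four_mul_phiNum_lt ha hy₁ h
  · exact h
  · simpa [h₁, h₂] using pow_four_mul_phiNum_lt ha hy₂ h

lemma exists_phiNum_eq_zero {a : ℝ} (ha₀ : 0 < a) (ha₁ : a < 1) :
    ∃ y ∈ Set.Ioo (0 : ℝ) 1, phiNum a y = 0 := by
  have hcont : ContinuousOn (phiNum a) (Set.Icc 0 1) := by
    unfold phiNum; fun_prop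
  have h₀ : phiNum a 0 < 0 := by unfold phiNum; nlinarith
  have h₁ : 0 < phiNum a 1 := by unfold phiNum; nlinarith
  exact intermediate_value_Ioo zero_le_one hcont ⟨h₀, h₁⟩

lemma phiA_eq_zero_iff_eq_or_eq_neg {a c : ℝ} (ha : 0 ≤ a) (hc : 0 < c) (hc₀ : phiA a c = 0)
    {y : ℝ} : y ≠ 0 ∧ phiA a y = 0 ↔ y = c ∨ y = -c := by
  have hroot : ∀ {y}, 0 < y → phiA a y = 0 → y = c := fun hy h =>
    eq_of_phiNum_eq_zero ha hy hc ((phiA_eq_zero_iff ha hy).mp h) ((phiA_eq_zero_iff ha hc).mp hc₀)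
  constructor
  · rintro ⟨hy, h⟩
    rcases hy.lt_or_gt with hneg | hpos
    · right
      linarith [hroot (neg_pos.mpr hneg) (by rw [phiA_neg, h, neg_zero])]
    · exact .inl (hroot hpos h)
  · rintro (rfl | rfl)
    · exact ⟨hc.ne', hc₀⟩
    · exact ⟨neg_ne_zero.mpr hc.ne', by rw [phiA_neg, hc₀, neg_zero]⟩

lemma re_eq_zero_and_Ca_eq_zero_iff {a c : ℝ} (ha : 0 ≤ a) (hc : 0 < c) (hc₀ : phiA a c = 0)
    (z : ℂ) : z.re = 0 ∧ z ≠ 0 ∧ Ca a z = 0 ↔ z = I * c ∨ z = -(I * c) := by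
  constructor
  · rintro ⟨hre, hz, hCa⟩
    have hz' : z = I * z.im := Complex.ext (by simp [hre]) (by simp)
    rw [hz'] at hz hCa ⊢
    have hy : z.im ≠ 0 := by rintro h; simp [h] at hz
    rcases (phiA_eq_zero_iff_eq_or_eq_neg ha hc hc₀).mp
      ⟨hy, (Ca_I_mul_ofReal_eq_zero_iff a _).mp hCa⟩ with h | h <;> simp [h]
  · rintro (rfl | rfl)
    · exact ⟨by simp, by simp [hc.ne'], (Ca_I_mul_ofReal_eq_zero_iff a c).mpr hc₀⟩
    · refine ⟨by simp, by simp [hc.ne'], ?_⟩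
      rw [← mul_neg, ← ofReal_neg, Ca_I_mul_ofReal_eq_zero_iff, phiA_neg, hc₀, neg_zero]

/-- For `0 < a < 1`, `φ_a` has exactly one root in `(0,1)`, and `C_a` has exactly two
purely imaginary roots. -/
theorem stmt16 (a : ℝ) (ha0 : 0 < a) (ha1 : a < 1) :
    (∃! y : ℝ, y ∈ Set.Ioo (0 : ℝ) 1 ∧ phiA a y = 0) ∧
    (∃ y : ℝ, 0 < y ∧ ∀ z : ℂ,
      (z.re = 0 ∧ z ≠ 0 ∧ Ca (a : ℂ) z = 0) ↔
        (z = Complex.I * (y : ℂ) ∨ z = -(Complex.I * (y : ℂ)))) := by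
  obtain ⟨c, ⟨hc0, hc1⟩, hc⟩ := exists_phiNum_eq_zero ha0 ha1
  have hphi : phiA a c = 0 := (phiA_eq_zero_iff ha0.le hc0).mpr hc
  refine ⟨⟨c, ⟨⟨hc0, hc1⟩, hphi⟩, fun y ⟨⟨hy0, _⟩, hy⟩ => ?_⟩,
    c, hc0, re_eq_zero_and_Ca_eq_zero_iff ha0.le hc0 hphi⟩
  exact ((phiA_eq_zero_iff_eq_or_eq_neg ha0.le hc0 hphi).mp ⟨hy0.ne', hy⟩).resolve_right
    (by linarith)
end

section
/- For 0 < a < 1, the map φ_a (the restriction of C_a to the imaginary axis, C_a(iy) = iφ_a(y)) has a periodic point of exact period 2 in (0, ζ), where ζ is the positive root of φ_a, and this 2-periodic point is repelling. Consequently C_a has a repelling 2-periodic point on the positive imaginary axis. -/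
/-- The derivative of `phiA a` at a point `t` (valid away from the pole `t = 0`). -/
noncomputable def phiD (a t : ℝ) : ℝ :=
  ((420 * t ^ 9 + 408 * (a + 1) * t ^ 7 + 24 * (5 * a ^ 2 + 3 * a + 5) * t ^ 5
      + 12 * (a ^ 3 - 7 * a ^ 2 - 7 * a + 1) * t ^ 3 - 12 * a * (a ^ 2 + 3 * a + 1) * t)
      * (8 * t ^ 3 * (2 * t ^ 2 + (a + 1)) ^ 3)
    - (42 * t ^ 10 + 51 * (a + 1) * t ^ 8 + 4 * (5 * a ^ 2 + 3 * a + 5) * t ^ 6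
      + 3 * (a ^ 3 - 7 * a ^ 2 - 7 * a + 1) * t ^ 4
      - 6 * a * (a ^ 2 + 3 * a + 1) * t ^ 2 - a ^ 2 * (a + 1))
      * (24 * t ^ 2 * (2 * t ^ 2 + (a + 1)) ^ 3 + 96 * t ^ 4 * (2 * t ^ 2 + (a + 1)) ^ 2))
    / (8 * t ^ 3 * (2 * t ^ 2 + (a + 1)) ^ 3) ^ 2

lemma hasDeriv_num (a t : ℝ) :
    HasDerivAt (fun y : ℝ => 42 * y ^ 10 + 51 * (a + 1) * y ^ 8
        + 4 * (5 * a ^ 2 + 3 * a + 5) * y ^ 6 + 3 * (a ^ 3 - 7 * a ^ 2 - 7 * a + 1) * y ^ 4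
        - 6 * a * (a ^ 2 + 3 * a + 1) * y ^ 2 - a ^ 2 * (a + 1))
      (420 * t ^ 9 + 408 * (a + 1) * t ^ 7 + 24 * (5 * a ^ 2 + 3 * a + 5) * t ^ 5
        + 12 * (a ^ 3 - 7 * a ^ 2 - 7 * a + 1) * t ^ 3 - 12 * a * (a ^ 2 + 3 * a + 1) * t) t := by
  have h1 := HasDerivAt.const_mul (42 : ℝ) (hasDerivAt_pow 10 t)
  have h2 := HasDerivAt.const_mul (51 * (a + 1)) (hasDerivAt_pow 8 t)
  have h3 := HasDerivAt.const_mul (4 * (5 * a ^ 2 + 3 * a + 5)) (hasDerivAt_pow 6 t)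
  have h4 := HasDerivAt.const_mul (3 * (a ^ 3 - 7 * a ^ 2 - 7 * a + 1)) (hasDerivAt_pow 4 t)
  have h5 := HasDerivAt.const_mul (6 * a * (a ^ 2 + 3 * a + 1)) (hasDerivAt_pow 2 t)
  have h := ((((h1.add h2).add h3).add h4).sub h5).sub_const (a ^ 2 * (a + 1))
  refine h.congr_deriv ?_
  push_cast
  ring

lemma hasDeriv_den (a t : ℝ) :
    HasDerivAt (fun y : ℝ => 8 * y ^ 3 * (2 * y ^ 2 + (a + 1)) ^ 3)
      (24 * t ^ 2 * (2 * t ^ 2 + (a + 1)) ^ 3 + 96 * t ^ 4 * (2 * t ^ 2 + (a + 1)) ^ 2) t := by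
  have h1 := HasDerivAt.const_mul (8 : ℝ) (hasDerivAt_pow 3 t)
  have h2 : HasDerivAt (fun y : ℝ => 2 * y ^ 2 + (a + 1)) (2 * (2 * t)) t := by
    have := HasDerivAt.const_mul (2 : ℝ) (hasDerivAt_pow 2 t)
    have h' := this.add_const (a + 1)
    refine h'.congr_deriv ?_
    push_cast
    ring
  have h := h1.mul (h2.pow 3)
  refine h.congr_deriv ?_
  push_cast [Pi.pow_apply]
  ring

lemma hasDeriv_phiA (a t : ℝ) (h : 8 * t ^ 3 * (2 * t ^ 2 + (a + 1)) ^ 3 ≠ 0) :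
    HasDerivAt (phiA a) (phiD a t) t := by
  unfold phiA phiD
  exact (hasDeriv_num a t).div (hasDeriv_den a t) h

lemma phiD_even (a t : ℝ) : phiD a (-t) = phiD a t := by
  unfold phiD
  ring

lemma keyIneq (a s : ℝ) (ha : 0 < a) (hs : 0 < s)
    (hP : 106 * s ^ 5 + 147 * (a + 1) * s ^ 4 + (68 * a ^ 2 + 108 * a + 68) * s ^ 3
        + (11 * a ^ 3 + 3 * a ^ 2 + 3 * a + 11) * s ^ 2
        - 6 * a * (a ^ 2 + 3 * a + 1) * s - a ^ 2 * (a + 1) = 0) :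
    0 < 932 * s ^ 4 + 984 * (a + 1) * s ^ 3 + (312 * a ^ 2 + 456 * a + 312) * s ^ 2
        + (28 * a ^ 3 - 36 * a ^ 2 - 36 * a + 28) * s - 12 * a * (a ^ 2 + 3 * a + 1) := by
  have hid : s * (932 * s ^ 4 + 984 * (a + 1) * s ^ 3 + (312 * a ^ 2 + 456 * a + 312) * s ^ 2
        + (28 * a ^ 3 - 36 * a ^ 2 - 36 * a + 28) * s - 12 * a * (a ^ 2 + 3 * a + 1))
      = 2 * (106 * s ^ 5 + 147 * (a + 1) * s ^ 4 + (68 * a ^ 2 + 108 * a + 68) * s ^ 3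
        + (11 * a ^ 3 + 3 * a ^ 2 + 3 * a + 11) * s ^ 2
        - 6 * a * (a ^ 2 + 3 * a + 1) * s - a ^ 2 * (a + 1))
        + 2 * (a + 1) * (a - 12 * s ^ 2) ^ 2
        + (720 * s ^ 5 + 402 * (a + 1) * s ^ 4 + (176 * a ^ 2 + 240 * a + 176) * s ^ 3
          + 6 * (a ^ 3 + a ^ 2 + a + 1) * s ^ 2) := by ring
  have hpos : 0 < s * (932 * s ^ 4 + 984 * (a + 1) * s ^ 3 + (312 * a ^ 2 + 456 * a + 312) * s ^ 2
        + (28 * a ^ 3 - 36 * a ^ 2 - 36 * a + 28) * s - 12 * a * (a ^ 2 + 3 * a + 1)) := by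
    rw [hid, hP]
    nlinarith [mul_nonneg ha.le (sq_nonneg (a - 12 * s ^ 2)), sq_nonneg (a - 12 * s ^ 2),
      pow_pos hs 5, pow_pos hs 4, pow_pos hs 3, pow_pos hs 2,
      mul_pos ha (pow_pos hs 4), mul_pos ha (pow_pos hs 3),
      mul_pos (mul_pos ha ha) (pow_pos hs 3), mul_pos ha (pow_pos hs 2),
      mul_pos (mul_pos ha ha) (pow_pos hs 2),
      mul_pos (mul_pos (mul_pos ha ha) ha) (pow_pos hs 2)]
  by_contra hq
  push_neg at hq
  nlinarith [mul_nonneg hs.le (neg_nonneg.mpr hq)]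

lemma phiD_gt_one (a y : ℝ) (ha : 0 < a) (hy : 0 < y)
    (hF : 42 * y ^ 10 + 51 * (a + 1) * y ^ 8 + 4 * (5 * a ^ 2 + 3 * a + 5) * y ^ 6
        + 3 * (a ^ 3 - 7 * a ^ 2 - 7 * a + 1) * y ^ 4
        - 6 * a * (a ^ 2 + 3 * a + 1) * y ^ 2 - a ^ 2 * (a + 1)
        + y * (8 * y ^ 3 * (2 * y ^ 2 + (a + 1)) ^ 3) = 0) :
    1 < phiD a y := by
  have h2 : (0:ℝ) < 2 * y ^ 2 + (a + 1) := by nlinarith [sq_nonneg y]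
  have hDpos : (0:ℝ) < 8 * y ^ 3 * (2 * y ^ 2 + (a + 1)) ^ 3 :=
    mul_pos (mul_pos (by norm_num) (pow_pos hy 3)) (pow_pos h2 3)
  have hP : 106 * (y ^ 2) ^ 5 + 147 * (a + 1) * (y ^ 2) ^ 4
        + (68 * a ^ 2 + 108 * a + 68) * (y ^ 2) ^ 3
        + (11 * a ^ 3 + 3 * a ^ 2 + 3 * a + 11) * (y ^ 2) ^ 2
        - 6 * a * (a ^ 2 + 3 * a + 1) * (y ^ 2) - a ^ 2 * (a + 1) = 0 := by
    linear_combination hF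
  have hQ := keyIneq a (y ^ 2) ha (pow_pos hy 2) hP
  unfold phiD
  rw [one_lt_div (pow_pos hDpos 2)]
  have hid : (420 * y ^ 9 + 408 * (a + 1) * y ^ 7 + 24 * (5 * a ^ 2 + 3 * a + 5) * y ^ 5
      + 12 * (a ^ 3 - 7 * a ^ 2 - 7 * a + 1) * y ^ 3 - 12 * a * (a ^ 2 + 3 * a + 1) * y)
      * (8 * y ^ 3 * (2 * y ^ 2 + (a + 1)) ^ 3)
    - (42 * y ^ 10 + 51 * (a + 1) * y ^ 8 + 4 * (5 * a ^ 2 + 3 * a + 5) * y ^ 6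
      + 3 * (a ^ 3 - 7 * a ^ 2 - 7 * a + 1) * y ^ 4
      - 6 * a * (a ^ 2 + 3 * a + 1) * y ^ 2 - a ^ 2 * (a + 1))
      * (24 * y ^ 2 * (2 * y ^ 2 + (a + 1)) ^ 3 + 96 * y ^ 4 * (2 * y ^ 2 + (a + 1)) ^ 2)
    - (8 * y ^ 3 * (2 * y ^ 2 + (a + 1)) ^ 3) ^ 2
    = y * (932 * (y ^ 2) ^ 4 + 984 * (a + 1) * (y ^ 2) ^ 3
        + (312 * a ^ 2 + 456 * a + 312) * (y ^ 2) ^ 2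
        + (28 * a ^ 3 - 36 * a ^ 2 - 36 * a + 28) * (y ^ 2) - 12 * a * (a ^ 2 + 3 * a + 1))
        * (8 * y ^ 3 * (2 * y ^ 2 + (a + 1)) ^ 3)
      - (42 * y ^ 10 + 51 * (a + 1) * y ^ 8 + 4 * (5 * a ^ 2 + 3 * a + 5) * y ^ 6
        + 3 * (a ^ 3 - 7 * a ^ 2 - 7 * a + 1) * y ^ 4
        - 6 * a * (a ^ 2 + 3 * a + 1) * y ^ 2 - a ^ 2 * (a + 1)
        + y * (8 * y ^ 3 * (2 * y ^ 2 + (a + 1)) ^ 3))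
        * (24 * y ^ 2 * (2 * y ^ 2 + (a + 1)) ^ 3 + 96 * y ^ 4 * (2 * y ^ 2 + (a + 1)) ^ 2) := by
    ring
  rw [hF] at hid
  nlinarith [hid, mul_pos (mul_pos hy hQ) hDpos]

lemma Ca_I (a t : ℝ) (ha : 0 < a) (ht : t ≠ 0) :
    Ca (a : ℂ) (Complex.I * (t : ℂ)) = Complex.I * ((phiA a t : ℝ) : ℂ) := by
  have h2 : (0:ℝ) < 2 * t ^ 2 + (a + 1) := by nlinarith [sq_nonneg t]
  have hDne : (8 * t ^ 3 * (2 * t ^ 2 + (a + 1)) ^ 3 : ℝ) ≠ 0 :=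
    mul_ne_zero (mul_ne_zero (by norm_num) (pow_ne_zero 3 ht)) (pow_ne_zero 3 (ne_of_gt h2))
  have hDCne : ((8 * t ^ 3 * (2 * t ^ 2 + (a + 1)) ^ 3 : ℝ) : ℂ) ≠ 0 := by exact_mod_cast hDne
  have hnumC : 42 * (Complex.I * (t:ℂ)) ^ 10 + (-51 * ((a:ℂ) + 1)) * (Complex.I * (t:ℂ)) ^ 8
      + (4 * (5 * (a:ℂ) ^ 2 + 3 * (a:ℂ) + 5)) * (Complex.I * (t:ℂ)) ^ 6
      + (-3 * ((a:ℂ) ^ 3 - 7 * (a:ℂ) ^ 2 - 7 * (a:ℂ) + 1)) * (Complex.I * (t:ℂ)) ^ 4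
      + (-6 * (a:ℂ) * ((a:ℂ) ^ 2 + 3 * (a:ℂ) + 1)) * (Complex.I * (t:ℂ)) ^ 2
      + (a:ℂ) ^ 2 * ((a:ℂ) + 1)
      = -(((42 * t ^ 10 + 51 * (a + 1) * t ^ 8 + 4 * (5 * a ^ 2 + 3 * a + 5) * t ^ 6
        + 3 * (a ^ 3 - 7 * a ^ 2 - 7 * a + 1) * t ^ 4
        - 6 * a * (a ^ 2 + 3 * a + 1) * t ^ 2 - a ^ 2 * (a + 1) : ℝ)) : ℂ) := by
    push_cast
    linear_combination ((3) * (t:ℂ) ^ 4 + (-3) * (t:ℂ) ^ 4 * Complex.I ^ 2 + (20) * (t:ℂ) ^ 6 + (-20) * (t:ℂ) ^ 6 * Complex.I ^ 2 + (20) * (t:ℂ) ^ 6 * Complex.I ^ 4 + (51) * (t:ℂ) ^ 8 + (-51) * (t:ℂ) ^ 8 * Complex.I ^ 2 + (51) * (t:ℂ) ^ 8 * Complex.I ^ 4 + (-51) * (t:ℂ) ^ 8 * Complex.I ^ 6 + (42) * (t:ℂ) ^ 10 + (-42) * (t:ℂ) ^ 10 * Complex.I ^ 2 + (42) * (t:ℂ)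 ^ 10 * Complex.I ^ 4 + (-42) * (t:ℂ) ^ 10 * Complex.I ^ 6 + (42) * (t:ℂ) ^ 10 * Complex.I ^ 8 + (-6) * (a:ℂ) ^ 1 * (t:ℂ) ^ 2 + (-21) * (a:ℂ) ^ 1 * (t:ℂ) ^ 4 + (21) * (a:ℂ) ^ 1 * (t:ℂ) ^ 4 * Complex.I ^ 2 + (12) * (a:ℂ) ^ 1 * (t:ℂ) ^ 6 + (-12) * (a:ℂ) ^ 1 * (t:ℂ) ^ 6 * Complex.I ^ 2 + (12) * (a:ℂ) ^ 1 * (t:ℂ) ^ 6 * Complex.I ^ 4 + (51) * (a:ℂ) ^ 1 * (t:ℂ) ^ 8 + (-51) * (a:ℂ) ^ 1 * (t:ℂ) ^ 8 * Complex.I ^ 2 + (51) * (a:ℂ) ^ 1 * (t:ℂ) ^ 8 * Complex.I ^ 4 + (-51) * (a:ℂ) ^ 1 * (t:ℂ) ^ 8 * Complex.I ^ 6 + (-18) * (a:ℂ) ^ 2 * (t:ℂ) ^ 2 + (-21) * (a:ℂ) ^ 2 * (t:ℂ) ^ 4 + (21) * (a:ℂ) ^ 2 * (t:ℂ) ^ 4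 * Complex.I ^ 2 + (20) * (a:ℂ) ^ 2 * (t:ℂ) ^ 6 + (-20) * (a:ℂ) ^ 2 * (t:ℂ) ^ 6 * Complex.I ^ 2 + (20) * (a:ℂ) ^ 2 * (t:ℂ) ^ 6 * Complex.I ^ 4 + (-6) * (a:ℂ) ^ 3 * (t:ℂ) ^ 2 + (3) * (a:ℂ) ^ 3 * (t:ℂ) ^ 4 + (-3) * (a:ℂ) ^ 3 * (t:ℂ) ^ 4 * Complex.I ^ 2) * Complex.I_sq
  have hdenC : 8 * (Complex.I * (t:ℂ)) ^ 3 * (2 * (Complex.I * (t:ℂ)) ^ 2 - ((a:ℂ) + 1)) ^ 3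
      = Complex.I * (((8 * t ^ 3 * (2 * t ^ 2 + (a + 1)) ^ 3 : ℝ)) : ℂ) := by
    push_cast
    linear_combination ((-8) * (t:ℂ) ^ 3 * Complex.I ^ 1 + (-48) * (t:ℂ) ^ 5 * Complex.I ^ 1 + (48) * (t:ℂ) ^ 5 * Complex.I ^ 3 + (-96) * (t:ℂ) ^ 7 * Complex.I ^ 1 + (96) * (t:ℂ) ^ 7 * Complex.I ^ 3 + (-96) * (t:ℂ) ^ 7 * Complex.I ^ 5 + (-64) * (t:ℂ) ^ 9 * Complex.I ^ 1 + (64) * (t:ℂ) ^ 9 * Complex.I ^ 3 + (-64) * (t:ℂ) ^ 9 * Complex.I ^ 5 + (64) * (t:ℂ) ^ 9 * Complex.I ^ 7 + (-24) * (a:ℂ) ^ 1 * (t:ℂ) ^ 3 * Complex.I ^ 1 + (-96) * (a:ℂ) ^ 1 * (t:ℂ) ^ 5 * Complex.I ^ 1 + (96) * (a:ℂ) ^ 1 * (t:ℂ) ^ 5 * Complex.I ^ 3 + (-96) * (a:ℂ) ^ 1 * (t:ℂ) ^ 7 * Complex.I ^ 1 + (96) * (a:ℂ) ^ 1 * (t:ℂ)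 ^ 7 * Complex.I ^ 3 + (-96) * (a:ℂ) ^ 1 * (t:ℂ) ^ 7 * Complex.I ^ 5 + (-24) * (a:ℂ) ^ 2 * (t:ℂ) ^ 3 * Complex.I ^ 1 + (-48) * (a:ℂ) ^ 2 * (t:ℂ) ^ 5 * Complex.I ^ 1 + (48) * (a:ℂ) ^ 2 * (t:ℂ) ^ 5 * Complex.I ^ 3 + (-8) * (a:ℂ) ^ 3 * (t:ℂ) ^ 3 * Complex.I ^ 1) * Complex.I_sq
  unfold Ca phiA
  rw [hnumC, hdenC, Complex.ofReal_div]
  rw [← mul_div_assoc, div_eq_div_iff (mul_ne_zero Complex.I_ne_zero hDCne) hDCne]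
  linear_combination (-((((42 * t ^ 10 + 51 * (a + 1) * t ^ 8 + 4 * (5 * a ^ 2 + 3 * a + 5) * t ^ 6
        + 3 * (a ^ 3 - 7 * a ^ 2 - 7 * a + 1) * t ^ 4
        - 6 * a * (a ^ 2 + 3 * a + 1) * t ^ 2 - a ^ 2 * (a + 1) : ℝ)) : ℂ)
      * (((8 * t ^ 3 * (2 * t ^ 2 + (a + 1)) ^ 3 : ℝ)) : ℂ))) * Complex.I_sq

/-- For `0 < a < 1` and `ζ` the positive root of `φ_a`, there is a repelling 2-periodic
point of `φ_a` in `(0,ζ)`; consequently `C_a` has a repelling 2-periodic point on the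
positive imaginary axis. -/
theorem stmt17 (a : ℝ) (ha0 : 0 < a) (ha1 : a < 1)
    (ζ : ℝ) (hζ : 0 < ζ) (hroot : phiA a ζ = 0) :
    ∃ y : ℝ, y ∈ Set.Ioo 0 ζ ∧ phiA a (phiA a y) = y ∧ phiA a y ≠ y ∧
      1 < |deriv (fun t => phiA a (phiA a t)) y| ∧
      Ca (a : ℂ) (Ca (a : ℂ) (Complex.I * (y : ℂ))) = Complex.I * (y : ℂ) := by
  have hDζpos : (0:ℝ) < 8 * ζ ^ 3 * (2 * ζ ^ 2 + (a + 1)) ^ 3 :=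
    mul_pos (mul_pos (by norm_num) (pow_pos hζ 3))
      (pow_pos (by nlinarith [sq_nonneg ζ]) 3)
  have hNζ : 42 * ζ ^ 10 + 51 * (a + 1) * ζ ^ 8 + 4 * (5 * a ^ 2 + 3 * a + 5) * ζ ^ 6
      + 3 * (a ^ 3 - 7 * a ^ 2 - 7 * a + 1) * ζ ^ 4
      - 6 * a * (a ^ 2 + 3 * a + 1) * ζ ^ 2 - a ^ 2 * (a + 1) = 0 := by
    unfold phiA at hroot
    rcases div_eq_zero_iff.mp hroot with h | h
    · exact h
    · exact absurd h (ne_of_gt hDζpos)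
  have hcont : ContinuousOn (fun y : ℝ => 42 * y ^ 10 + 51 * (a + 1) * y ^ 8
      + 4 * (5 * a ^ 2 + 3 * a + 5) * y ^ 6 + 3 * (a ^ 3 - 7 * a ^ 2 - 7 * a + 1) * y ^ 4
      - 6 * a * (a ^ 2 + 3 * a + 1) * y ^ 2 - a ^ 2 * (a + 1)
      + y * (8 * y ^ 3 * (2 * y ^ 2 + (a + 1)) ^ 3)) (Set.Icc 0 ζ) := by fun_prop
  have hmem : (0:ℝ) ∈ Set.Ioo ((fun y : ℝ => 42 * y ^ 10 + 51 * (a + 1) * y ^ 8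
      + 4 * (5 * a ^ 2 + 3 * a + 5) * y ^ 6 + 3 * (a ^ 3 - 7 * a ^ 2 - 7 * a + 1) * y ^ 4
      - 6 * a * (a ^ 2 + 3 * a + 1) * y ^ 2 - a ^ 2 * (a + 1)
      + y * (8 * y ^ 3 * (2 * y ^ 2 + (a + 1)) ^ 3)) 0)
      ((fun y : ℝ => 42 * y ^ 10 + 51 * (a + 1) * y ^ 8
      + 4 * (5 * a ^ 2 + 3 * a + 5) * y ^ 6 + 3 * (a ^ 3 - 7 * a ^ 2 - 7 * a + 1) * y ^ 4
      - 6 * a * (a ^ 2 + 3 * a + 1) * y ^ 2 - a ^ 2 * (a + 1)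
      + y * (8 * y ^ 3 * (2 * y ^ 2 + (a + 1)) ^ 3)) ζ) := by
    constructor
    · show 42 * (0:ℝ) ^ 10 + 51 * (a + 1) * 0 ^ 8 + 4 * (5 * a ^ 2 + 3 * a + 5) * 0 ^ 6
        + 3 * (a ^ 3 - 7 * a ^ 2 - 7 * a + 1) * 0 ^ 4
        - 6 * a * (a ^ 2 + 3 * a + 1) * 0 ^ 2 - a ^ 2 * (a + 1)
        + 0 * (8 * 0 ^ 3 * (2 * 0 ^ 2 + (a + 1)) ^ 3) < 0
      nlinarith [mul_pos (mul_pos ha0 ha0) (show (0:ℝ) < a + 1 by linarith)]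
    · show (0:ℝ) < 42 * ζ ^ 10 + 51 * (a + 1) * ζ ^ 8 + 4 * (5 * a ^ 2 + 3 * a + 5) * ζ ^ 6
        + 3 * (a ^ 3 - 7 * a ^ 2 - 7 * a + 1) * ζ ^ 4
        - 6 * a * (a ^ 2 + 3 * a + 1) * ζ ^ 2 - a ^ 2 * (a + 1)
        + ζ * (8 * ζ ^ 3 * (2 * ζ ^ 2 + (a + 1)) ^ 3)
      nlinarith [hNζ, mul_pos hζ hDζpos]
  obtain ⟨y₀, hy₀mem, hFy₀'⟩ := intermediate_value_Ioo hζ.le hcont hmem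
  obtain ⟨hy0, hyζ⟩ := hy₀mem
  have hFy : 42 * y₀ ^ 10 + 51 * (a + 1) * y₀ ^ 8 + 4 * (5 * a ^ 2 + 3 * a + 5) * y₀ ^ 6
      + 3 * (a ^ 3 - 7 * a ^ 2 - 7 * a + 1) * y₀ ^ 4
      - 6 * a * (a ^ 2 + 3 * a + 1) * y₀ ^ 2 - a ^ 2 * (a + 1)
      + y₀ * (8 * y₀ ^ 3 * (2 * y₀ ^ 2 + (a + 1)) ^ 3) = 0 := hFy₀'
  have h2y : (0:ℝ) < 2 * y₀ ^ 2 + (a + 1) := by nlinarith [sq_nonneg y₀]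
  have hDpos : (0:ℝ) < 8 * y₀ ^ 3 * (2 * y₀ ^ 2 + (a + 1)) ^ 3 :=
    mul_pos (mul_pos (by norm_num) (pow_pos hy0 3)) (pow_pos h2y 3)
  have hDne := ne_of_gt hDpos
  have hDMne : 8 * (-y₀) ^ 3 * (2 * (-y₀) ^ 2 + (a + 1)) ^ 3 ≠ 0 := by
    have e : 8 * (-y₀) ^ 3 * (2 * (-y₀) ^ 2 + (a + 1)) ^ 3
        = -(8 * y₀ ^ 3 * (2 * y₀ ^ 2 + (a + 1)) ^ 3) := by ring
    rw [e]
    exact neg_ne_zero.mpr hDne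
  have hphiy : phiA a y₀ = -y₀ := by
    unfold phiA
    rw [div_eq_iff hDne]
    linear_combination hFy
  have hphim : phiA a (-y₀) = y₀ := by
    unfold phiA
    rw [div_eq_iff hDMne]
    linear_combination hFy
  refine ⟨y₀, ⟨hy0, hyζ⟩, ?_, ?_, ?_, ?_⟩
  · rw [hphiy, hphim]
  · rw [hphiy]
    intro h
    linarith
  · have hdy := hasDeriv_phiA a y₀ hDne
    have hdm := hasDeriv_phiA a (-y₀) hDMne
    have hdm' : HasDerivAt (phiA a) (phiD a (-y₀)) (phiA a y₀) := by
      rw [hphiy]; exact hdm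
    have hderiv : deriv (fun t => phiA a (phiA a t)) y₀ = phiD a (-y₀) * phiD a y₀ := by
      exact (hdm'.comp y₀ hdy).deriv
    have h1 := phiD_gt_one a y₀ ha0 hy0 hFy
    rw [hderiv, phiD_even]
    rw [abs_of_pos (by nlinarith)]
    nlinarith
  · have hk1 := Ca_I a y₀ ha0 (ne_of_gt hy0)
    have hk2 := Ca_I a (-y₀) ha0 (by intro h; exact absurd (by linarith : y₀ = 0) (ne_of_gt hy0))
    rw [hk1, hphiy]
    push_cast
    push_cast at hk2
    rw [hk2, hphim]
end
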